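/- Exact commutator identity between multiplication by a coordinate and a Bessel potential: For every s ∈ ℝ, every ℓ ∈ {1,2} and every Schwartz function f on ℝ², one has the identity of functions on ℝ²: x_ℓ · (⟨D⟩^s f)(x) − (⟨D⟩^s (y ↦ y_ℓ f(y)))(x) = s · (⟨D⟩^{s−2} ∂_ℓ f)(x) for all x ∈ ℝ². -/

import Mathlib

/-!
On the Fourier side `⟨D⟩^s` is multiplication by the symbol `m_s(ξ) = (1 + 4π²|ξ|²)^{s/2}`,
while multiplication by the coordinate `⟪·, v⟫` becomes `-(2πi)⁻¹ ∂_v`. The commutator of the two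
is therefore multiplication by `-(2πi)⁻¹ ∂_v m_s = -(2πi)⁻¹ 4π² s ⟪ξ, v⟫ m_{s-2}(ξ)`, and since
`(2πi)² = -4π²` this is `s m_{s-2}(ξ) · 2πi ⟪ξ, v⟫`, the symbol of `s ⟨D⟩^{s-2} ∂_v`.
-/

open MeasureTheory Real
open scoped FourierTransform ENNReal

noncomputable section

/-- The plane `ℝ²`. -/
abbrev E2 : Type := EuclideanSpace ℝ (Fin 2)

/-- The Bessel potential operator `⟨D⟩^s f = ℱ⁻¹((1 + 4π²|ξ|²)^{s/2} ℱf)`. -/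
noncomputable def besselD (s : ℝ) (f : E2 → ℂ) : E2 → ℂ :=
  𝓕⁻ (fun ξ : E2 => (((1 + 4 * π ^ 2 * ‖ξ‖ ^ 2) ^ (s / 2) : ℝ) : ℂ) * 𝓕 f ξ)

/-- The partial derivative `∂_i` in the `i`-th coordinate direction. -/
noncomputable def pd (i : Fin 2) (f : E2 → ℂ) : E2 → ℂ :=
  fun x => fderiv ℝ f x (EuclideanSpace.single i 1)

/-- The `W^{1,p}(ℝ²)` norm `‖f‖_{L^p} + ‖∂₁f‖_{L^p} + ‖∂₂f‖_{L^p}`. -/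
noncomputable def W1pNorm (p : ℝ≥0∞) (f : E2 → ℂ) : ℝ≥0∞ :=
  eLpNorm f p volume + eLpNorm (pd 0 f) p volume + eLpNorm (pd 1 f) p volume

open SchwartzMap LineDeriv FourierTransform

section BesselSymbol

variable {V : Type*} [NormedAddCommGroup V] [InnerProductSpace ℝ V]

def besselSymbol (s : ℝ) (ξ : V) : ℝ := (1 + 4 * π ^ 2 * ‖ξ‖ ^ 2) ^ (s / 2)

@[fun_prop]
theorem besselSymbol_hasTemperateGrowth (s : ℝ) :
    (besselSymbol s : V → ℝ).HasTemperateGrowth := by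
  have h_comp : besselSymbol s = (fun x : V => (1 + ‖x‖ ^ 2) ^ (s / 2)) ∘
      ⇑((2 * π) • ContinuousLinearMap.id ℝ V) := by
    funext ξ
    simp [besselSymbol, norm_smul, mul_pow, abs_of_pos pi_pos]
    ring_nf
  rw [h_comp]
  exact (Function.hasTemperateGrowth_one_add_norm_sq_rpow V (s / 2)).comp
    ((2 * π) • ContinuousLinearMap.id ℝ V).hasTemperateGrowth

theorem hasFDerivAt_besselSymbol (s : ℝ) (ξ : V) :
    HasFDerivAt (besselSymbol s) ((4 * π ^ 2 * s * besselSymbol (s - 2) ξ) • innerSL ℝ ξ) ξ := by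
  have hpos : 0 < 1 + 4 * π ^ 2 * ‖ξ‖ ^ 2 := by positivity
  have hbase : HasFDerivAt (fun ξ : V => 1 + 4 * π ^ 2 * ‖ξ‖ ^ 2)
      ((4 * π ^ 2) • (2 • innerSL ℝ ξ)) ξ := by
    simpa using ((hasFDerivAt_id ξ).norm_sq.const_mul (4 * π ^ 2)).const_add 1
  refine ((Real.hasDerivAt_rpow_const (p := s / 2) (Or.inl hpos.ne')).comp_hasFDerivAt ξ
    hbase).congr_fderiv ?_
  ext y
  simp only [besselSymbol, FunLike.coe_smul, Pi.smul_apply, smul_eq_mul, innerSL_apply_apply]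
  rw [show (s - 2) / 2 = s / 2 - 1 by ring]
  ring

theorem fderiv_besselSymbol_apply (s : ℝ) (ξ v : V) :
    fderiv ℝ (besselSymbol s) ξ v = 4 * π ^ 2 * s * (besselSymbol (s - 2) ξ * inner ℝ ξ v) := by
  rw [(hasFDerivAt_besselSymbol s ξ).fderiv]
  simp [mul_assoc]

end BesselSymbol

namespace SchwartzMap

variable {V : Type*} [NormedAddCommGroup V] [InnerProductSpace ℝ V]

theorem lineDerivOp_smulLeftCLM {F : Type*} [NormedAddCommGroup F] [NormedSpace ℝ F]
    {g g' : V → ℝ} (hg : g.HasTemperateGrowth) (hg' : g'.HasTemperateGrowth) {v : V}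
    (hderiv : ∀ x, fderiv ℝ g x v = g' x) (f : 𝓢(V, F)) :
    ∂_{v} (smulLeftCLM F g f) = smulLeftCLM F g' f + smulLeftCLM F g (∂_{v} f) := by
  ext x
  have hfun : ⇑(smulLeftCLM F g f) = fun y => g y • f y := smulLeftCLM_apply hg f
  rw [lineDerivOp_apply_eq_fderiv, hfun,
    fderiv_fun_smul (hg.1.differentiable (by simp) x) f.differentiableAt]
  simp [hg, hg', hderiv, lineDerivOp_apply_eq_fderiv, add_comm]

variable [FiniteDimensional ℝ V] [MeasurableSpace V] [BorelSpace V]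
  {G : Type*} [NormedAddCommGroup G] [NormedSpace ℂ G]

theorem two_pi_I_smul_fourier_smulLeftCLM_inner (v : V) (f : 𝓢(V, G)) :
    (2 * π * Complex.I) • 𝓕 (smulLeftCLM G (inner ℝ · v) f) = -∂_{v} (𝓕 f) := by
  rw [lineDerivOp_fourier_eq, FourierTransform.fourier_smul, neg_smul, neg_neg]

variable (G) in
def besselOp (s : ℝ) : 𝓢(V, G) →L[ℝ] 𝓢(V, G) := fourierMultiplierCLM G (besselSymbol s)

variable [CompleteSpace G]

theorem fourier_besselOp (s : ℝ) (f : 𝓢(V, G)) :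
    𝓕 (besselOp G s f) = smulLeftCLM G (besselSymbol s) (𝓕 f) := by
  rw [besselOp, fourierMultiplierCLM_apply, fourier_fourierInv_eq]

theorem inner_smul_besselOp_sub_besselOp_inner_smul (s : ℝ) (v : V) (f : 𝓢(V, G)) :
    smulLeftCLM G (inner ℝ · v) (besselOp G s f) - besselOp G s (smulLeftCLM G (inner ℝ · v) f)
      = s • besselOp G (s - 2) (∂_{v} f) := by
  have hc : (2 * π * Complex.I : ℂ) ≠ 0 := by simp [pi_ne_zero, Complex.I_ne_zero]
  have h_dsymbol : (fun ξ : V => 4 * π ^ 2 * s * (besselSymbol (s - 2) ξ * inner ℝ ξ v))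
      |>.HasTemperateGrowth := by fun_prop
  apply (fourierCLE ℂ 𝓢(V, G)).injective
  apply smul_right_injective _ hc
  ext ξ
  simp only [fourierCLE_apply, map_sub, smul_sub]
  rw [two_pi_I_smul_fourier_smulLeftCLM_inner, fourier_besselOp, fourier_besselOp,
    FourierTransform.fourier_smul, fourier_besselOp,
    lineDerivOp_smulLeftCLM (by fun_prop) h_dsymbol (fderiv_besselSymbol_apply s · v),
    fourier_lineDerivOp_eq]
  have h_coord := congrArg (· ξ) (two_pi_I_smul_fourier_smulLeftCLM_inner v f)
  simp only [smul_apply, neg_apply] at h_coord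
  simp only [sub_apply, add_apply, neg_apply, smul_apply,
    smulLeftCLM_apply_apply (besselSymbol_hasTemperateGrowth _),
    smulLeftCLM_apply_apply h_dsymbol,
    smulLeftCLM_apply_apply (Function.hasTemperateGrowth_inner_left v)]
  rw [smul_comm _ (besselSymbol s ξ), h_coord]
  have hI : (2 * π * Complex.I) * (2 * π * Complex.I) = -(4 * π ^ 2 : ℝ) := by
    push_cast
    linear_combination (4 * π ^ 2 : ℂ) * Complex.I_sq
  simp only [← Complex.coe_smul]
  linear_combination (norm := module) (-s * besselSymbol (s - 2) ξ * inner ℝ ξ v : ℂ) • hI • 𝓕 f ξ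

end SchwartzMap

theorem besselD_eq_besselOp (s : ℝ) (f : 𝓢(E2, ℂ)) : besselD s f = besselOp ℂ s f := by
  rw [besselOp, fourierMultiplierCLM_apply, fourierInv_coe, besselD]
  congr 1
  funext ξ
  simp [besselSymbol_hasTemperateGrowth, fourier_coe, besselSymbol]

theorem smulLeftCLM_inner_single_apply {ι : Type*} [Fintype ι] [DecidableEq ι] (i : ι)
    (f : 𝓢(EuclideanSpace ℝ ι, ℂ)) (y : EuclideanSpace ℝ ι) :
    smulLeftCLM ℂ (inner ℝ · (EuclideanSpace.single i (1 : ℝ))) f y = (y i : ℂ) * f y := by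
  rw [smulLeftCLM_apply_apply (by fun_prop)]
  simp [EuclideanSpace.inner_single_right, Complex.real_smul]

/-- Exact commutator identity between multiplication by the coordinate `x_ℓ` and the
Bessel potential `⟨D⟩^s`:  `x_ℓ ⟨D⟩^s f − ⟨D⟩^s(y_ℓ f) = s ⟨D⟩^{s-2} ∂_ℓ f`. -/
theorem coordinate_bessel_commutator (s : ℝ) (ℓ : Fin 2) (f : SchwartzMap E2 ℂ) (x : E2) :
    (x ℓ : ℂ) * besselD s (⇑f) x - besselD s (fun y => (y ℓ : ℂ) * f y) x
      = (s : ℂ) * besselD (s - 2) (pd ℓ ⇑f) x := by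
  have h := congrArg (· x)
    (inner_smul_besselOp_sub_besselOp_inner_smul s (EuclideanSpace.single ℓ 1) f)
  simp only [sub_apply, smul_apply, smulLeftCLM_inner_single_apply] at h
  have h_mul : (fun y => (y ℓ : ℂ) * f y)
      = ⇑(smulLeftCLM ℂ (inner ℝ · (EuclideanSpace.single ℓ (1 : ℝ))) f) :=
    funext fun y => (smulLeftCLM_inner_single_apply ℓ f y).symm
  have h_pd : pd ℓ ⇑f = ⇑(∂_{EuclideanSpace.single ℓ (1 : ℝ)} f : 𝓢(E2, ℂ)) := rfl
  rw [h_mul, h_pd, besselD_eq_besselOp, besselD_eq_besselOp, besselD_eq_besselOp, h,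
    Complex.real_smul]

end
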